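/- For a finite graph and N : E → ℤ≥0, the number of ways to orient all edges of the multigraph G_N so that the resulting current is sourceless, squared, equals the number of ways to orient and two-color the edges of G_N so that both the red and the blue currents are sourceless: (#{∂r = 0}_N)² = #{∂r = 0, ∂b = 0}_N. -/

import Mathlib

open Finset

/-- A finite multigraph on vertex set `V`: a finite set of distinguishable
strands (edges), each with an unordered pair of distinct endpoints. -/
structure MG (V : Type) where
  Strand : Type
  [fin : Fintype Strand]
  [dec : DecidableEq Strand]
  ends : Strand → Sym2 V
  noloop : ∀ s, ¬ (ends s).IsDiag

attribute [instance] MG.fin MG.dec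

variable {V : Type} [Fintype V] [DecidableEq V]

/-- An oriented (one-colored) configuration on the multigraph `G`. -/
structure Config (G : MG V) where
  orient : G.Strand → V × V
  compat : ∀ s, Sym2.mk.uncurry (orient s) = G.ends s

/-- A two-colored oriented configuration on the multigraph `G`
(`red s = true` means the strand `s` is red, otherwise it is blue). -/
structure Config2 (G : MG V) where
  orient : G.Strand → V × V
  red : G.Strand → Bool
  compat : ∀ s, Sym2.mk.uncurry (orient s) = G.ends s

/-- The current induced by an oriented configuration. -/
def Config.cur {G : MG V} (ω : Config G) (x y : V) : ℕ :=
  (univ.filter fun s => ω.orient s = (x, y)).card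

/-- The red current of a two-colored configuration. -/
def Config2.redCur {G : MG V} (ω : Config2 G) (x y : V) : ℕ :=
  (univ.filter fun s => ω.orient s = (x, y) ∧ ω.red s = true).card

/-- The blue current of a two-colored configuration. -/
def Config2.blueCur {G : MG V} (ω : Config2 G) (x y : V) : ℕ :=
  (univ.filter fun s => ω.orient s = (x, y) ∧ ω.red s = false).card

/-- The source function of a current. -/
def csrc (n : V → V → ℕ) (x : V) : ℤ :=
  ∑ y, ((n x y : ℤ) - n y x)

/-- The bijection `F`: paint everything red keeping orientations for the first
component; reverse red strands and paint everything blue for the second. -/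
def F {G : MG V} (ω : Config2 G) : Config G × Config G :=
  (⟨ω.orient, ω.compat⟩,
   ⟨fun s => if ω.red s then (ω.orient s).swap else ω.orient s, by
      intro s
      rw [← ω.compat s]
      by_cases h : ω.red s
      · simp only [h, if_true, Function.uncurry, Prod.fst_swap, Prod.snd_swap]
        exact Sym2.eq_swap
      · simp [h]⟩)

/-!
`F` is a bijection onto pairs of configurations: a pair `(ω₁, ω₂)` comes from the two-coloured
configuration with orientation `ω₁` whose red strands are exactly those on which `ω₁` and `ω₂`
disagree (these are reversed, never equal, because `G` has no loops). The two components of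
`F ω` carry the currents `r + b` and `rᵀ + b`, with sources `∂r + ∂b` and `∂b - ∂r`; both vanish
iff `∂r = ∂b = 0`.
-/

section Orientation

omit [Fintype V] [DecidableEq V]

variable {G : MG V}

@[ext]
theorem Config.ext {ω₁ ω₂ : Config G} (h : ∀ s, ω₁.orient s = ω₂.orient s) : ω₁ = ω₂ := by
  obtain ⟨o, _⟩ := ω₁
  obtain ⟨o', _⟩ := ω₂
  obtain rfl : o = o' := funext h
  rfl

@[ext]
theorem Config2.ext {ω₁ ω₂ : Config2 G} (h : ∀ s, ω₁.orient s = ω₂.orient s)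
    (h' : ∀ s, ω₁.red s = ω₂.red s) : ω₁ = ω₂ := by
  obtain ⟨o, r, _⟩ := ω₁
  obtain ⟨o', r', _⟩ := ω₂
  obtain rfl : o = o' := funext h
  obtain rfl : r = r' := funext h'
  rfl

theorem Config.fst_ne_snd (ω : Config G) (s : G.Strand) : (ω.orient s).1 ≠ (ω.orient s).2 :=
  fun h => G.noloop s (by rw [← ω.compat s]; exact Sym2.mk_isDiag_iff.2 h)

theorem Config.orient_ne_swap (ω : Config G) (s : G.Strand) : ω.orient s ≠ (ω.orient s).swap :=
  fun h => ω.fst_ne_snd s (congrArg Prod.fst h)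

theorem Config.orient_eq_or_eq_swap (ω₁ ω₂ : Config G) (s : G.Strand) :
    ω₂.orient s = ω₁.orient s ∨ ω₂.orient s = (ω₁.orient s).swap :=
  Sym2.mk_eq_mk_iff.1 ((ω₂.compat s).trans (ω₁.compat s).symm)

theorem Config2.orient_fst_F (ω : Config2 G) (s : G.Strand) : (F ω).1.orient s = ω.orient s :=
  rfl

theorem Config2.orient_snd_F (ω : Config2 G) (s : G.Strand) :
    (F ω).2.orient s = if ω.red s then (ω.orient s).swap else ω.orient s :=
  rfl

end Orientation

section Currents

omit [Fintype V]

variable {G : MG V}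

theorem Config2.cur_fst_F (ω : Config2 G) :
    (F ω).1.cur = fun x y => ω.redCur x y + ω.blueCur x y := by
  funext x y
  rw [Config.cur, Config2.redCur, Config2.blueCur, card_filter, card_filter, card_filter,
    ← sum_add_distrib]
  refine sum_congr rfl fun s _ => ?_
  rw [orient_fst_F]
  cases ω.red s <;> simp

theorem Config2.cur_snd_F (ω : Config2 G) :
    (F ω).2.cur = fun x y => ω.redCur y x + ω.blueCur x y := by
  funext x y
  rw [Config.cur, Config2.redCur, Config2.blueCur, card_filter, card_filter, card_filter,
    ← sum_add_distrib]
  refine sum_congr rfl fun s _ => ?_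
  rw [orient_snd_F]
  cases ω.red s <;> simp [Prod.swap_eq_iff_eq_swap]

def Config2.ofPair (p : Config G × Config G) : Config2 G :=
  ⟨p.1.orient, fun s => decide (p.1.orient s ≠ p.2.orient s), p.1.compat⟩

def configEquiv (G : MG V) : Config2 G ≃ Config G × Config G where
  toFun := F
  invFun := Config2.ofPair
  left_inv ω := by
    refine Config2.ext (fun _ => rfl) fun s => ?_
    have := (F ω).1.orient_ne_swap s
    cases h : ω.red s <;> simp_all [Config2.ofPair, Config2.orient_fst_F, Config2.orient_snd_F]
  right_inv := by
    rintro ⟨ω₁, ω₂⟩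
    refine Prod.ext rfl (Config.ext fun s => ?_)
    rcases ω₁.orient_eq_or_eq_swap ω₂ s with h | h <;>
      simp [Config2.ofPair, Config2.orient_snd_F, h]

end Currents

section Sources

omit [DecidableEq V]

theorem csrc_add (n m : V → V → ℕ) (x : V) :
    csrc (fun x y => n x y + m x y) x = csrc n x + csrc m x := by
  simp only [csrc, ← sum_add_distrib, Nat.cast_add]
  exact sum_congr rfl fun _ _ => by ring

theorem csrc_flip (n : V → V → ℕ) (x : V) : csrc (fun x y => n y x) x = -csrc n x := by
  simp only [csrc, ← sum_neg_distrib, neg_sub]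

end Sources

section Sourceless

variable {G : MG V}

theorem Config2.csrc_fst_F (ω : Config2 G) (x : V) :
    csrc (F ω).1.cur x = csrc ω.redCur x + csrc ω.blueCur x := by
  rw [cur_fst_F, csrc_add]

theorem Config2.csrc_snd_F (ω : Config2 G) (x : V) :
    csrc (F ω).2.cur x = csrc ω.blueCur x - csrc ω.redCur x := by
  rw [cur_snd_F, csrc_add, csrc_flip, neg_add_eq_sub]

theorem Config2.sourceless_iff_sourceless_F (ω : Config2 G) :
    ((∀ x, csrc ω.redCur x = 0) ∧ (∀ x, csrc ω.blueCur x = 0)) ↔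
      (∀ x, csrc (F ω).1.cur x = 0) ∧ (∀ x, csrc (F ω).2.cur x = 0) := by
  simp only [csrc_fst_F, csrc_snd_F]
  refine ⟨fun ⟨hr, hb⟩ => ⟨fun x => by simp [hr, hb], fun x => by simp [hr, hb]⟩,
    fun ⟨h₁, h₂⟩ => ⟨fun x => ?_, fun x => ?_⟩⟩ <;> linarith [h₁ x, h₂ x]

end Sourceless

/-- `(#{∂r = 0}_N)² = #{∂r = 0, ∂b = 0}_N`: the square of the number of
sourceless orientations of `G_N` equals the number of two-colorings and
orientations of `G_N` with both currents sourceless. -/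
theorem sq_card_sourceless (G : MG V) :
    (Nat.card {ω : Config G // ∀ x, csrc ω.cur x = 0}) ^ 2 =
      Nat.card {ω : Config2 G //
        (∀ x, csrc ω.redCur x = 0) ∧ (∀ x, csrc ω.blueCur x = 0)} := by
  rw [sq, ← Nat.card_prod]
  exact Nat.card_congr (((configEquiv G).subtypeEquiv Config2.sourceless_iff_sourceless_F).trans
    (Equiv.subtypeProdEquivProd ..)).symm
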